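/- arXiv:0804.0472 — 3 statements merged into one kernel-verified Lean document; each statement's English description precedes it below -/
import Mathlib

section
/- Let T₁ be a bounded partial integral operator on L²(Ω×Ω) with kernel k ∈ L²(Ω³), and let K_α (α ∈ Ω) be the integral operators on L²(Ω) with kernels k(·,·,α). If λ ∈ ℂ is an eigenvalue of T₁, then there exists a measurable set Ω₀ ⊆ Ω with μ(Ω₀) > 0 such that λ is an eigenvalue of K_α for every α ∈ Ω₀. -/
/-!
An eigenfunction `f` of `T₁` is a nonzero element of `L²(Ω × Ω)`. By Fubini–Tonelli its slices
`f(·, α)` lie in `L²(Ω)` for a.e. `α` and are nonzero on a set of `α` of positive measure, and the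
eigenvalue equation `T₁ f = λ f`, holding a.e. on `Ω × Ω`, holds for a.e. `α` slice by slice,
where it reads `K_α f(·, α) = λ f(·, α)`.
-/

open MeasureTheory

namespace MeasureTheory

variable {α β E : Type*} [MeasurableSpace α] [MeasurableSpace β] {μ : Measure α} {ν : Measure β}

theorem Measure.ae_ae_eq_prodMk_right_of_prod [SFinite μ] [SFinite ν] {γ : Type*}
    {f g : α × β → γ} (h : f =ᵐ[μ.prod ν] g) :
    ∀ᵐ y ∂ν, (fun x => f (x, y)) =ᵐ[μ] fun x => g (x, y) :=
  Measure.ae_ae_of_ae_prod (Measure.measurePreserving_swap.quasiMeasurePreserving.ae_eq h)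

theorem MemLp.prodMk_right [NormedAddCommGroup E] [SFinite μ] [SFinite ν] {f : α × β → E}
    {p : ENNReal} (hf : MemLp f p (μ.prod ν)) (hp0 : p ≠ 0) (hp : p ≠ ⊤) :
    ∀ᵐ y ∂ν, MemLp (fun x => f (x, y)) p μ := by
  filter_upwards [hf.aestronglyMeasurable.prodMk_right,
    (hf.integrable_norm_rpow hp0 hp).prod_left_ae] with y hmeas hint
  exact (integrable_norm_rpow_iff hmeas hp0 hp).1 hint

theorem AEStronglyMeasurable.exists_measurableSet_pos_prodMk_right_not_ae_eq_zero
    [TopologicalSpace E] [TopologicalSpace.MetrizableSpace E] [Zero E] [SFinite μ] [SFinite ν]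
    {f : α × β → E} (hf : AEStronglyMeasurable f (μ.prod ν)) (hne : ¬ f =ᵐ[μ.prod ν] 0) :
    ∃ A, MeasurableSet A ∧ 0 < ν A ∧ ∀ᵐ y ∂ν, y ∈ A → ¬ (fun x => f (x, y)) =ᵐ[μ] 0 := by
  set g := hf.mk f
  have hzero : MeasurableSet {p : α × β | g p = 0} :=
    hf.stronglyMeasurable_mk.measurableSet_eq_fun stronglyMeasurable_const
  refine ⟨{y | μ {x | g (x, y) ≠ 0} ≠ 0},
    (measurable_measure_prodMk_right hzero.compl) (measurableSet_singleton 0).compl, ?_, ?_⟩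
  · refine pos_iff_ne_zero.2 fun hA => hne (hf.ae_eq_mk.trans ?_)
    have hslices : ∀ᵐ y ∂ν, ∀ᵐ x ∂μ, g (x, y) = 0 := by
      filter_upwards [measure_eq_zero_iff_ae_notMem.1 hA] with y hy
      exact ae_iff.2 (not_not.1 hy)
    exact (Measure.ae_prod_iff_ae_ae hzero).2 ((Measure.ae_ae_comm hzero).2 hslices)
  · filter_upwards [Measure.ae_ae_eq_prodMk_right_of_prod hf.ae_eq_mk] with y hfg hy hfy
    exact hy (ae_iff.1 (hfg.symm.trans hfy))

theorem MeasurableSet.exists_subset_pos_forall_of_ae_imp {A : Set β} (hA : MeasurableSet A)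
    (hpos : 0 < ν A) {P : β → Prop} (hP : ∀ᵐ y ∂ν, y ∈ A → P y) :
    ∃ B ⊆ A, MeasurableSet B ∧ 0 < ν B ∧ ∀ y ∈ B, P y := by
  set N := toMeasurable ν {y | ¬ (y ∈ A → P y)}
  have hN : ν N = 0 := by rw [measure_toMeasurable]; exact ae_iff.1 hP
  refine ⟨A \ N, Set.sdiff_subset, hA.diff (measurableSet_toMeasurable _ _), ?_, ?_⟩
  · rwa [measure_sdiff_null hN]
  · intro y ⟨hyA, hyN⟩
    by_contra hy
    exact hyN (subset_toMeasurable _ _ fun hy' => hy (hy' hyA))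

end MeasureTheory

theorem pio_eigenvalue_implies_slice_eigenvalue_general (ν : ℕ) (a b : ℝ)
    (Ω : Set (Fin ν → ℝ)) (hΩ : Ω = Set.univ.pi fun _ => Set.Icc a b)
    (μ : Measure (Fin ν → ℝ)) (hμ : μ = volume.restrict Ω)
    (k : (Fin ν → ℝ) → (Fin ν → ℝ) → (Fin ν → ℝ) → ℂ)
    (l : ℂ)
    (heig : ∃ f : (Fin ν → ℝ) × (Fin ν → ℝ) → ℂ, MemLp f 2 (μ.prod μ) ∧
      ¬ f =ᵐ[μ.prod μ] 0 ∧
      (fun p => ∫ s, k p.1 s p.2 * f (s, p.2) ∂μ) =ᵐ[μ.prod μ] fun p => l * f p) :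
    ∃ Ω₀ ⊆ Ω, MeasurableSet Ω₀ ∧ 0 < μ Ω₀ ∧
      ∀ α ∈ Ω₀, ∃ φ : (Fin ν → ℝ) → ℂ, MemLp φ 2 μ ∧ ¬ φ =ᵐ[μ] 0 ∧
        (fun x => ∫ s, k x s α * φ s ∂μ) =ᵐ[μ] fun x => l * φ x := by
  obtain ⟨f, hf, hfne, hfeig⟩ := heig
  have : SFinite μ := hμ ▸ inferInstance
  have hΩ_ae : ∀ᵐ α ∂μ, α ∈ Ω := hμ ▸ ae_restrict_mem (hΩ ▸ .univ_pi fun _ => measurableSet_Icc)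
  obtain ⟨A, hA, hApos, hAne⟩ :=
    hf.aestronglyMeasurable.exists_measurableSet_pos_prodMk_right_not_ae_eq_zero hfne
  obtain ⟨Ω₀, -, hΩ₀, hpos, hgood⟩ := hA.exists_subset_pos_forall_of_ae_imp hApos
    (P := fun α => α ∈ Ω ∧ ∃ φ : (Fin ν → ℝ) → ℂ, MemLp φ 2 μ ∧ ¬ φ =ᵐ[μ] 0 ∧
      (fun x => ∫ s, k x s α * φ s ∂μ) =ᵐ[μ] fun x => l * φ x)
    (by
      filter_upwards [hΩ_ae, hAne, hf.prodMk_right two_ne_zero ENNReal.ofNat_ne_top,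
        Measure.ae_ae_eq_prodMk_right_of_prod hfeig] with α hαΩ hne hL2 heig hαA
      exact ⟨hαΩ, fun x => f (x, α), hL2, hne hαA, heig⟩)
  exact ⟨Ω₀, fun α hα => (hgood α hα).1, hΩ₀, hpos, fun α hα => (hgood α hα).2⟩

/-- If `λ` is an eigenvalue of the partial integral operator `T₁`, then there
is a measurable `Ω₀ ⊆ Ω` with `μ(Ω₀) > 0` such that `λ` is an eigenvalue of the slice
integral operator `K_α` for every `α ∈ Ω₀`. -/
theorem pio_eigenvalue_implies_slice_eigenvalue (ν : ℕ) (a b : ℝ) (hab : a ≤ b)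
    (Ω : Set (Fin ν → ℝ)) (hΩ : Ω = Set.univ.pi fun _ => Set.Icc a b)
    (μ : Measure (Fin ν → ℝ)) (hμ : μ = volume.restrict Ω)
    (k : (Fin ν → ℝ) → (Fin ν → ℝ) → (Fin ν → ℝ) → ℂ)
    (hk_meas : Measurable fun p : (Fin ν → ℝ) × (Fin ν → ℝ) × (Fin ν → ℝ) =>
      k p.1 p.2.1 p.2.2)
    (hkL2 : MemLp (fun p : (Fin ν → ℝ) × (Fin ν → ℝ) × (Fin ν → ℝ) =>
      k p.1 p.2.1 p.2.2) 2 (μ.prod (μ.prod μ)))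
    (M : ℝ)
    (hM : ∀ᵐ t ∂μ, ∫ x, ∫ s, ‖k x s t‖ ^ 2 ∂μ ∂μ ≤ M)
    (l : ℂ)
    (heig : ∃ f : (Fin ν → ℝ) × (Fin ν → ℝ) → ℂ, MemLp f 2 (μ.prod μ) ∧
      ¬ f =ᵐ[μ.prod μ] 0 ∧
      (fun p => ∫ s, k p.1 s p.2 * f (s, p.2) ∂μ) =ᵐ[μ.prod μ] fun p => l * f p) :
    ∃ Ω₀ ⊆ Ω, MeasurableSet Ω₀ ∧ 0 < μ Ω₀ ∧
      ∀ α ∈ Ω₀, ∃ φ : (Fin ν → ℝ) → ℂ, MemLp φ 2 μ ∧ ¬ φ =ᵐ[μ] 0 ∧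
        (fun x => ∫ s, k x s α * φ s ∂μ) =ᵐ[μ] fun x => l * φ x :=
  pio_eigenvalue_implies_slice_eigenvalue_general ν a b Ω hΩ μ hμ k l heig
end

section
/- Consider the partial integral operator T₁ on L²([0,1]²) with kernel k(x,s,y) = e^{x−s}e^y. The operator T₁ has no nonzero eigenvalues: for every λ ∈ ℂ \ {0} and every f ∈ L²([0,1]²), T₁f = λf implies f = 0. -/
/-!
The kernel is separable, `k(x,s,y) = eˣ · e⁻ˢ · eʸ`, so for each fixed `y` the operator acts on the
slice `f(·,y)` as the rank-one map `h ↦ eˣ eʸ ∫ e⁻ˢ h(s) ds`, whose only nonzero eigenvalue is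
`eʸ ∫ e⁻ˢ eˢ ds = eʸ`. An eigenfunction for `λ ≠ 0` therefore has `∫ e⁻ˢ f(s,y) ds = 0` unless
`eʸ = λ`, which happens for at most one `y`; so this integral vanishes for a.e. `y`, and then
`f = λ⁻¹ T₁f = 0` almost everywhere.
-/

open MeasureTheory

section SeparableKernel

variable {𝕜 X Y : Type*} [RCLike 𝕜] [MeasurableSpace X] [MeasurableSpace Y]
  {μ : Measure X} {ν : Measure Y}

theorem integral_mul_eq_zero_of_rankOne_eigen {u v h : X → 𝕜} {l : 𝕜} (hl : l ≠ 0)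
    (hne : l ≠ ∫ s, v s * u s ∂μ)
    (heig : ∀ᵐ x ∂μ, u x * ∫ s, v s * h s ∂μ = l * h x) :
    ∫ s, v s * h s ∂μ = 0 := by
  set g := ∫ s, v s * h s ∂μ
  have hg : g = l⁻¹ * (∫ s, v s * u s ∂μ) * g := calc
    g = ∫ s, v s * u s * (l⁻¹ * g) ∂μ := by
        refine integral_congr_ae ?_
        filter_upwards [heig] with s hs
        have hs' : h s = l⁻¹ * (u s * g) := by rw [hs, inv_mul_cancel_left₀ hl]
        rw [hs']
        ring
    _ = l⁻¹ * (∫ s, v s * u s ∂μ) * g := by rw [integral_mul_const]; ring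
  by_contra hg0
  apply hne
  rw [← inv_mul_eq_one₀ hl]
  exact (mul_eq_right₀ hg0).mp hg.symm

theorem ae_eq_zero_of_separable_partial_integral_eigen [SFinite μ] [SFinite ν]
    {u v : X → 𝕜} {w : Y → 𝕜} {l : 𝕜} (hl : l ≠ 0)
    (hne : ∀ᵐ y ∂ν, l ≠ (∫ s, v s * u s ∂μ) * w y) {f : X × Y → 𝕜}
    (heig : (fun p => ∫ s, u p.1 * v s * w p.2 * f (s, p.2) ∂μ) =ᵐ[μ.prod ν]
      fun p => l * f p) :
    f =ᵐ[μ.prod ν] 0 := by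
  set g : Y → 𝕜 := fun y => ∫ s, v s * f (s, y) ∂μ
  have hT : ∀ p : X × Y, ∫ s, u p.1 * v s * w p.2 * f (s, p.2) ∂μ = u p.1 * w p.2 * g p.2 := by
    intro p
    rw [← integral_const_mul]
    congr 1 with s
    ring
  have heig_sep : ∀ᵐ p ∂μ.prod ν, u p.1 * w p.2 * g p.2 = l * f p := by
    filter_upwards [heig] with p hp
    rwa [← hT]
  have heig_swap : ∀ᵐ q ∂ν.prod μ, u q.2 * w q.1 * g q.1 = l * f (q.2, q.1) :=
    Measure.measurePreserving_swap.quasiMeasurePreserving.ae heig_sep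
  have hg : ∀ᵐ y ∂ν, g y = 0 := by
    filter_upwards [Measure.ae_ae_of_ae_prod heig_swap, hne] with y hy hney
    refine integral_mul_eq_zero_of_rankOne_eigen (u := fun x => u x * w y) hl ?_ hy
    simpa only [← mul_assoc, integral_mul_const] using hney
  filter_upwards [heig_sep, Measure.quasiMeasurePreserving_snd.ae hg] with p hp hgp
  rw [hgp, mul_zero, eq_comm, mul_eq_zero] at hp
  exact hp.resolve_left hl

end SeparableKernel

theorem ae_exp_ofReal_ne {μ : Measure ℝ} [NullSingletonClass μ] (l : ℂ) :
    ∀ᵐ (y : ℝ) ∂μ, l ≠ Complex.exp (y : ℂ) := by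
  have hsub : {y : ℝ | ¬l ≠ Complex.exp (y : ℂ)}.Subsingleton := by
    intro a ha b hb
    simp only [not_not, Set.mem_ofPred_eq, ← Complex.ofReal_exp] at ha hb
    exact Real.exp_injective (Complex.ofReal_injective (ha.symm.trans hb))
  exact ae_iff.mpr (hsub.measure_zero μ)

theorem example_kernel_no_nonzero_eigenvalues_general
    (μ : Measure ℝ) (hμ : μ = volume.restrict (Set.Icc (0 : ℝ) 1))
    (k : ℝ → ℝ → ℝ → ℂ)
    (hk : ∀ x s y : ℝ, k x s y = Complex.exp ((x : ℂ) - (s : ℂ)) * Complex.exp (y : ℂ))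
    (l : ℂ) (hl : l ≠ 0)
    (f : ℝ × ℝ → ℂ)
    (heig : (fun p => ∫ s, k p.1 s p.2 * f (s, p.2) ∂μ) =ᵐ[μ.prod μ]
      fun p => l * f p) :
    f =ᵐ[μ.prod μ] 0 := by
  subst hμ
  have hk_sep : ∀ x s y : ℝ,
      k x s y = Complex.exp x * Complex.exp (-(s : ℂ)) * Complex.exp y := by
    intro x s y
    rw [hk, sub_eq_add_neg, Complex.exp_add]
  have hμ_one :
      ∫ s : ℝ, Complex.exp (-(s : ℂ)) * Complex.exp s ∂volume.restrict (Set.Icc 0 1) = 1 := by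
    simp [← Complex.exp_add, Real.volume_real_Icc]
  simp only [hk_sep] at heig
  refine ae_eq_zero_of_separable_partial_integral_eigen
    (u := fun x : ℝ => Complex.exp x) (v := fun s : ℝ => Complex.exp (-(s : ℂ)))
    (w := fun y : ℝ => Complex.exp y) hl ?_ heig
  simpa only [hμ_one, one_mul] using ae_exp_ofReal_ne l

/-- The partial integral operator on `L²([0,1]²)` with kernel
`k(x,s,y) = e^{x-s}e^y` has no nonzero eigenvalues: `T₁f = λf` with `λ ≠ 0` forces `f = 0`
(as an element of `L²`). -/
theorem example_kernel_no_nonzero_eigenvalues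
    (μ : Measure ℝ) (hμ : μ = volume.restrict (Set.Icc (0 : ℝ) 1))
    (k : ℝ → ℝ → ℝ → ℂ)
    (hk : ∀ x s y : ℝ, k x s y = Complex.exp ((x : ℂ) - (s : ℂ)) * Complex.exp (y : ℂ))
    (l : ℂ) (hl : l ≠ 0)
    (f : ℝ × ℝ → ℂ) (hf : MemLp f 2 (μ.prod μ))
    (heig : (fun p => ∫ s, k p.1 s p.2 * f (s, p.2) ∂μ) =ᵐ[μ.prod μ]
      fun p => l * f p) :
    f =ᵐ[μ.prod μ] 0 :=
  example_kernel_no_nonzero_eigenvalues_general μ hμ k hk l hl f heig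
end

section
/- For κ₀ ∈ [1,∞), the function f₀(x,y) = e^x y^{1/2}/(1 − κ₀y) satisfies the equation f(x,y) − κ₀∫₀¹ e^{x−s} y f(s,y) ds = e^x y^{1/2} pointwise for every y ∈ [0,1] with y ≠ 1/κ₀, but f₀ does not belong to L²([0,1]²), i.e., ∫₀¹∫₀¹ |f₀(x,y)|² dx dy = ∞. -/
open MeasureTheory Filter Topology Set
open scoped ENNReal Interval

/-!
The integrand `e^{x-s} y f₀(s,y) = eˣ y √y / (1 - κ₀y)` does not depend on `s`, so for
`y ≠ 1/κ₀` the equation is an algebraic identity. On the other hand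
`|f₀(x,y)|² ≥ y / (1 - κ₀y)² = κ₀⁻² y / (y - 1/κ₀)²`, and the singular point `1/κ₀` lies in
`(0, 1]`; near it this function dominates `1 / (y - 1/κ₀)`, which is not integrable there.
-/

theorem sub_inv_isBigO_div_sub_sq {c : ℝ} (hc : c ≠ 0) :
    (fun x : ℝ => (x - c)⁻¹) =O[𝓝[≠] c] fun x => x / (x - c) ^ 2 := by
  refine Asymptotics.IsBigO.of_bound 1 ?_
  filter_upwards [eventually_nhdsWithin_of_eventually_nhds
      (eventually_abs_sub_lt c (half_pos (abs_pos.2 hc))), self_mem_nhdsWithin] with x hxc hx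
  have hpos : 0 < |x - c| := abs_pos.2 (sub_ne_zero.2 hx)
  have hle : |x - c| ≤ |x| := by
    have := abs_sub_abs_le_abs_sub c x
    rw [abs_sub_comm] at this
    linarith
  calc ‖(x - c)⁻¹‖ = |x - c| / |x - c| ^ 2 := by
        rw [norm_inv, Real.norm_eq_abs]; field_simp
    _ ≤ |x| / |x - c| ^ 2 := by gcongr
    _ = 1 * ‖x / (x - c) ^ 2‖ := by simp

theorem not_intervalIntegrable_div_sub_sq {a b c : ℝ} (hc₀ : c ≠ 0) (hab : a ≠ b)
    (hc : c ∈ [[a, b]]) : ¬IntervalIntegrable (fun x => x / (x - c) ^ 2) volume a b :=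
  not_intervalIntegrable_of_sub_inv_isBigO_punctured (sub_inv_isBigO_div_sub_sq hc₀) hab hc

theorem not_integrableOn_div_one_sub_mul_sq {κ : ℝ} (hκ : 1 ≤ κ) :
    ¬IntegrableOn (fun y : ℝ => y / (1 - κ * y) ^ 2) (Icc 0 1) := by
  intro h
  have hκ₀ : κ ≠ 0 := by positivity
  have hrescale : (fun y : ℝ => κ ^ 2 * (y / (1 - κ * y) ^ 2)) = fun y => y / (y - κ⁻¹) ^ 2 := by
    funext y
    rw [show 1 - κ * y = -κ * (y - κ⁻¹) by field_simp; ring, mul_pow, neg_sq, mul_div_assoc',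
      mul_div_mul_left _ _ (pow_ne_zero 2 hκ₀)]
  refine not_intervalIntegrable_div_sub_sq (inv_ne_zero hκ₀) (zero_ne_one' ℝ) ?_ ?_
  · rw [uIcc_of_le zero_le_one]
    exact ⟨by positivity, inv_le_one_of_one_le₀ hκ⟩
  · rw [← hrescale]
    exact ((intervalIntegrable_iff_integrableOn_Icc_of_le zero_le_one).2 h).const_mul _

theorem lintegral_prod_comp_snd {α β : Type*} [MeasurableSpace α] [MeasurableSpace β]
    {μ : Measure α} {ν : Measure β} [SFinite ν] {F : β → ℝ≥0∞} (hF : Measurable F) :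
    ∫⁻ p, F p.2 ∂μ.prod ν = μ univ * ∫⁻ y, F y ∂ν := by
  rw [← lintegral_map hF measurable_snd, Measure.map_snd_prod, lintegral_smul_measure, smul_eq_mul]

noncomputable def singularSolution (κ : ℝ) (p : ℝ × ℝ) : ℂ :=
  Complex.exp p.1 * (√p.2 : ℂ) / (1 - κ * p.2)

theorem exp_sub_mul_singularSolution (κ x s y : ℝ) :
    Complex.exp (x - s) * y * singularSolution κ (s, y) =
      Complex.exp x * y * √y / (1 - κ * y) := by
  rw [singularSolution, Complex.exp_sub]
  field_simp

theorem singularSolution_sub_integral {μ : Measure ℝ} [IsProbabilityMeasure μ] {κ y : ℝ}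
    (hy : 1 - κ * y ≠ 0) (x : ℝ) :
    singularSolution κ (x, y) - κ * ∫ s, Complex.exp (x - s) * y * singularSolution κ (s, y) ∂μ =
      Complex.exp x * √y := by
  have hden : (1 - κ * y : ℂ) ≠ 0 := by exact_mod_cast hy
  simp_rw [exp_sub_mul_singularSolution]
  rw [integral_const, probReal_univ, one_smul, singularSolution]
  field_simp

theorem norm_singularSolution_sq (κ x : ℝ) {y : ℝ} (hy : 0 ≤ y) :
    ‖singularSolution κ (x, y)‖ ^ 2 = Real.exp x ^ 2 * (y / (1 - κ * y) ^ 2) := by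
  rw [singularSolution, show (1 - κ * y : ℂ) = ((1 - κ * y : ℝ) : ℂ) by push_cast; rfl,
    norm_div, norm_mul, Complex.norm_exp_ofReal, Complex.norm_real, Complex.norm_real,
    Real.norm_eq_abs, Real.norm_eq_abs, div_pow, mul_pow, sq_abs, sq_abs, Real.sq_sqrt hy]
  ring

theorem div_one_sub_mul_sq_le_norm_singularSolution_sq (κ : ℝ) {x y : ℝ} (hx : 0 ≤ x)
    (hy : 0 ≤ y) : y / (1 - κ * y) ^ 2 ≤ ‖singularSolution κ (x, y)‖ ^ 2 := by
  rw [norm_singularSolution_sq κ x hy]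
  exact le_mul_of_one_le_left (by positivity) (one_le_pow₀ (Real.one_le_exp hx))

theorem lintegral_norm_singularSolution_sq_eq_top {κ : ℝ} (hκ : 1 ≤ κ) :
    ∫⁻ p, (‖singularSolution κ p‖₊ : ℝ≥0∞) ^ 2
      ∂(volume.restrict (Icc (0 : ℝ) 1)).prod (volume.restrict (Icc (0 : ℝ) 1)) = ⊤ := by
  set μ := volume.restrict (Icc (0 : ℝ) 1)
  set g : ℝ → ℝ≥0∞ := fun y => ENNReal.ofReal (y / (1 - κ * y) ^ 2)
  have hg_top : ∫⁻ y, g y ∂μ = ⊤ := by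
    rw [← not_ne_iff, lintegral_ofReal_ne_top_iff_integrable
      (by fun_prop : Measurable fun y : ℝ => y / (1 - κ * y) ^ 2).aestronglyMeasurable]
    · exact not_integrableOn_div_one_sub_mul_sq hκ
    · filter_upwards [ae_restrict_mem measurableSet_Icc] with y hy
      exact div_nonneg hy.1 (sq_nonneg _)
  have hg_le : ∀ᵐ p ∂μ.prod μ, g p.2 ≤ (‖singularSolution κ p‖₊ : ℝ≥0∞) ^ 2 := by
    rw [Measure.prod_restrict]
    filter_upwards [ae_restrict_mem (measurableSet_Icc.prod measurableSet_Icc)] with p hp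
    obtain ⟨⟨hx, -⟩, hy, -⟩ := hp
    rw [← enorm_eq_nnnorm, ← ofReal_norm, ← ENNReal.ofReal_pow (norm_nonneg _)]
    exact ENNReal.ofReal_le_ofReal (div_one_sub_mul_sq_le_norm_singularSolution_sq κ hx hy)
  refine top_le_iff.1 ?_
  calc ⊤ = μ univ * ∫⁻ y, g y ∂μ := by simp [μ, hg_top, Real.volume_Icc]
    _ = ∫⁻ p, g p.2 ∂μ.prod μ := (lintegral_prod_comp_snd (by fun_prop)).symm
    _ ≤ _ := lintegral_mono_ae hg_le

/-- For `κ₀ ∈ [1,∞)`, the function `f₀(x,y) = eˣ·√y / (1 - κ₀y)` satisfies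
`f(x,y) - κ₀∫₀¹ e^{x-s} y f(s,y) ds = eˣ y^{1/2}` pointwise for every `y ∈ [0,1]` with
`y ≠ 1/κ₀`, but `f₀ ∉ L²([0,1]²)`, i.e. `∫∫ |f₀|² = ∞`. -/
theorem example_equation_singular_no_L2_solution
    (μ : Measure ℝ) (hμ : μ = volume.restrict (Set.Icc (0 : ℝ) 1))
    (κ₀ : ℝ) (hκ₀ : 1 ≤ κ₀)
    (f₀ : ℝ × ℝ → ℂ)
    (hf₀ : ∀ p : ℝ × ℝ,
      f₀ p = Complex.exp (p.1 : ℂ) * (Real.sqrt p.2 : ℂ) / (1 - (κ₀ : ℂ) * (p.2 : ℂ))) :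
    (∀ y ∈ Set.Icc (0 : ℝ) 1, y ≠ 1 / κ₀ → ∀ x ∈ Set.Icc (0 : ℝ) 1,
      f₀ (x, y) - (κ₀ : ℂ) *
          ∫ s, Complex.exp ((x : ℂ) - (s : ℂ)) * (y : ℂ) * f₀ (s, y) ∂μ =
        Complex.exp (x : ℂ) * (Real.sqrt y : ℂ)) ∧
    ∫⁻ p, (‖f₀ p‖₊ : ENNReal) ^ 2 ∂(μ.prod μ) = ⊤ := by
  obtain rfl : f₀ = singularSolution κ₀ := funext hf₀
  subst hμ
  have : IsProbabilityMeasure (volume.restrict (Icc (0 : ℝ) 1)) :=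
    ⟨by simp [Real.volume_Icc]⟩
  refine ⟨fun y _ hy x _ => singularSolution_sub_integral (fun h => ?_) x,
    lintegral_norm_singularSolution_sq_eq_top hκ₀⟩
  exact hy (eq_one_div_of_mul_eq_one_right (by linarith))
end
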